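/- arXiv:1112.5740 — 2 statements merged into one kernel-verified Lean document; each statement's English description precedes it below -/
import Mathlib

section
/- Let J be a Hausdorff topological space, let W₁, W₂ ⊆ J be open subsets with W₁ connected, and let φ : J → M be a continuous map such that the restrictions φ|_{W₁} and φ|_{W₂} are injective with φ(W₁) = φ(W₂) = U for some set U, and such that φ restricted to each Wᵢ is a homeomorphism onto U. If W₁ ∩ W₂ ≠ ∅, then W₁ = W₂. -/
/-!
Transport each `x ∈ W₁` to the point `g x ∈ W₂` with the same `φ`-value; `g` is continuous because
both restrictions of `φ` are homeomorphisms onto `U`. Since `φ` is injective on `W₂`, a point of `W₁`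
lies in `W₂` exactly when `g x = x`, so `W₁ ∩ W₂` is open and (as `J` is Hausdorff) closed in `W₁`.
Connectedness of `W₁` gives `W₁ ⊆ W₂`, and equality of the images gives the reverse inclusion.
-/

open Set

section

variable {X Y : Type*} [TopologicalSpace X] {φ : X → Y} {W V : Set X}

theorem isClopen_preimage_val_of_continuous_lift [T2Space X] (hV : IsOpen V) (hinj : InjOn φ V)
    {g : W → V} (hg : Continuous g) (hφg : ∀ x, φ (g x) = φ x) :
    IsClopen (Subtype.val ⁻¹' V : Set W) := by
  have hfix : (Subtype.val ⁻¹' V : Set W) = {x | ((g x : V) : X) = x} := by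
    ext x
    exact ⟨fun hx => hinj (g x).2 hx (hφg x), fun hx => show (x : X) ∈ V from hx ▸ (g x).2⟩
  refine ⟨?_, hV.preimage continuous_subtype_val⟩
  rw [hfix]
  exact isClosed_eq (continuous_subtype_val.comp hg) continuous_subtype_val

theorem subset_of_continuous_lift [T2Space X] (hW : IsPreconnected W) (hV : IsOpen V)
    (hinj : InjOn φ V) {g : W → V} (hg : Continuous g) (hφg : ∀ x, φ (g x) = φ x)
    (hne : (W ∩ V).Nonempty) : W ⊆ V := by
  have := Subtype.preconnectedSpace hW
  obtain ⟨x, hxW, hxV⟩ := hne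
  have huniv := (isClopen_preimage_val_of_continuous_lift hV hinj hg hφg).eq_univ
    ⟨⟨x, hxW⟩, hxV⟩
  exact fun y hy => eq_univ_iff_forall.1 huniv ⟨y, hy⟩

end

theorem stmt_2_general {J M : Type*} [TopologicalSpace J] [TopologicalSpace M] [T2Space J]
    (W₁ W₂ : Set J) (hW₂ : IsOpen W₂) (hconn : IsConnected W₁)
    (φ : J → M)
    (hinj₂ : Set.InjOn φ W₂)
    (U : Set M) (him₁ : φ '' W₁ = U) (him₂ : φ '' W₂ = U)
    (hhomeo₁ : ∃ h : W₁ ≃ₜ U, ∀ x : W₁, (h x : M) = φ x)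
    (hhomeo₂ : ∃ h : W₂ ≃ₜ U, ∀ x : W₂, (h x : M) = φ x)
    (hne : (W₁ ∩ W₂).Nonempty) : W₁ = W₂ := by
  obtain ⟨h₁, hh₁⟩ := hhomeo₁
  obtain ⟨h₂, hh₂⟩ := hhomeo₂
  have hφg (x : W₁) : φ (h₂.symm (h₁ x)) = φ x := by
    rw [← hh₂, h₂.apply_symm_apply, hh₁]
  have hsub : W₁ ⊆ W₂ := subset_of_continuous_lift hconn.isPreconnected hW₂ hinj₂
    (h₂.symm.continuous.comp h₁.continuous) hφg hne
  exact (hinj₂.image_eq_image_iff hsub subset_rfl).1 (him₁.trans him₂.symm)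

/-- If `J` is Hausdorff, `W₁, W₂ ⊆ J` are open, `W₁` is connected, and a continuous map
`φ : J → M` restricts to injections of `W₁` and `W₂` onto a common image `U`, being a
homeomorphism of each `Wᵢ` onto `U`, then `W₁ ∩ W₂ ≠ ∅` implies `W₁ = W₂`. -/
theorem stmt_2 {J M : Type*} [TopologicalSpace J] [TopologicalSpace M] [T2Space J]
    (W₁ W₂ : Set J) (hW₁ : IsOpen W₁) (hW₂ : IsOpen W₂) (hconn : IsConnected W₁)
    (φ : J → M) (hφ : Continuous φ)
    (hinj₁ : Set.InjOn φ W₁) (hinj₂ : Set.InjOn φ W₂)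
    (U : Set M) (him₁ : φ '' W₁ = U) (him₂ : φ '' W₂ = U)
    (hhomeo₁ : ∃ h : W₁ ≃ₜ U, ∀ x : W₁, (h x : M) = φ x)
    (hhomeo₂ : ∃ h : W₂ ≃ₜ U, ∀ x : W₂, (h x : M) = φ x)
    (hne : (W₁ ∩ W₂).Nonempty) : W₁ = W₂ :=
  stmt_2_general W₁ W₂ hW₂ hconn φ hinj₂ U him₁ him₂ hhomeo₁ hhomeo₂ hne
end

section
/- Let {N_n}_{n∈ℕ} be a decreasing family of open neighbourhoods of a compact set K in a topological space J, with Cl(N_{n+1}) ⊆ N_n for all n, each Cl(N_n) compact, and ⋂_n N_n = K. Let φ : J → M be a continuous map to a metric space such that φ restricted to K is injective and φ is injective on a neighbourhood of each point of K. Then φ is injective on N_n for some n. -/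
/-!
Call a pair `(p, q)` good if `φ p = φ q → p = q`. Injectivity on `K` and local injectivity
make every point of `K × K` have a neighbourhood of good pairs: off the diagonal `φ p ≠ φ q`
persists nearby, and on it use `U × U` for a neighbourhood `U` of injectivity. The sets
`closure (N n) × closure (N n)` are compact, decreasing and meet in `K × K`, so one of them
consists of good pairs.
-/

open Set Filter Topology

theorem eventually_eq_imp_eq_nhds_of_injOn {X Y : Type*} [TopologicalSpace X]
    [TopologicalSpace Y] [T2Space Y] {f : X → Y} {K : Set X} (hf : Continuous f)
    (hinj : InjOn f K) (hloc : ∀ k ∈ K, ∃ U ∈ 𝓝 k, InjOn f U) :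
    ∀ x ∈ K ×ˢ K, ∀ᶠ y in 𝓝 x, f y.1 = f y.2 → y.1 = y.2 := by
  rintro ⟨p, q⟩ ⟨hp, hq⟩
  by_cases hpq : f p = f q
  · obtain rfl : p = q := hinj hp hq hpq
    obtain ⟨U, hU, hUinj⟩ := hloc p hp
    filter_upwards [prod_mem_nhds hU hU] with y ⟨hy₁, hy₂⟩ using hUinj hy₁ hy₂
  · have hne : ∀ᶠ y in 𝓝 (p, q), f y.1 ≠ f y.2 :=
      (isClosed_eq (hf.comp continuous_fst) (hf.comp continuous_snd)).isOpen_compl.mem_nhds hpq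
    filter_upwards [hne] with y hy h using absurd h hy

theorem exists_subset_of_closure_succ_subset {X : Type*} [TopologicalSpace X]
    {N : ℕ → Set X} {K U : Set X} (hdec : ∀ n, closure (N (n + 1)) ⊆ N n)
    (hcpt : ∀ n, IsCompact (closure (N n))) (hinter : ⋂ n, N n = K)
    (hU : ∀ x ∈ K, U ∈ 𝓝 x) : ∃ n, N n ⊆ U := by
  have hanti : Antitone fun n => closure (N n) :=
    antitone_nat_of_succ_le fun n => (hdec n).trans subset_closure
  have hclosure_inter : ⋂ n, closure (N n) = K := by
    refine Subset.antisymm ?_ (hinter ▸ iInter_mono fun n => subset_closure)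
    exact hinter ▸ fun x hx => mem_iInter.2 fun n => hdec n (mem_iInter.1 hx (n + 1))
  obtain ⟨n, hn⟩ := exists_subset_nhds_of_isCompact' hanti.directed_ge hcpt
    (fun _ => isClosed_closure) (hclosure_inter ▸ hU)
  exact ⟨n, subset_closure.trans hn⟩

theorem stmt_16_general {J M : Type*} [TopologicalSpace J] [MetricSpace M]
    (K : Set J) (N : ℕ → Set J)
    (hdec : ∀ n, closure (N (n + 1)) ⊆ N n) (hcpt : ∀ n, IsCompact (closure (N n)))
    (hinter : ⋂ n, N n = K)
    (φ : J → M) (hφ : Continuous φ) (hinjK : Set.InjOn φ K)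
    (hloc : ∀ k ∈ K, ∃ U : Set J, IsOpen U ∧ k ∈ U ∧ Set.InjOn φ U) :
    ∃ n, Set.InjOn φ (N n) := by
  have hloc' : ∀ k ∈ K, ∃ U ∈ 𝓝 k, InjOn φ U := fun k hk =>
    let ⟨U, hU, hkU, hinj⟩ := hloc k hk
    ⟨U, hU.mem_nhds hkU, hinj⟩
  have hdec₂ : ∀ n, closure (N (n + 1) ×ˢ N (n + 1)) ⊆ N n ×ˢ N n := fun n => by
    rw [closure_prod_eq]
    exact prod_mono (hdec n) (hdec n)
  have hcpt₂ : ∀ n, IsCompact (closure (N n ×ˢ N n)) := fun n => by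
    rw [closure_prod_eq]
    exact (hcpt n).prod (hcpt n)
  have hinter₂ : ⋂ n, N n ×ˢ N n = K ×ˢ K := by
    ext x
    simp [← hinter, forall_and]
  obtain ⟨n, hn⟩ := exists_subset_of_closure_succ_subset hdec₂ hcpt₂ hinter₂
    (eventually_eq_imp_eq_nhds_of_injOn hφ hinjK hloc')
  exact ⟨n, fun p hp q hq => hn (mk_mem_prod hp hq)⟩

/-- Compactness argument of Lemma 3.14: given a decreasing family of open
neighbourhoods `N n` of a compact set `K` with `Cl (N (n+1)) ⊆ N n`, compact closures,
and `⋂ N n = K`, a continuous map `φ` into a metric space which is injective on `K`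
and locally injective at each point of `K` is injective on some `N n`. -/
theorem stmt_16 {J M : Type*} [TopologicalSpace J] [MetricSpace M]
    (K : Set J) (hK : IsCompact K) (N : ℕ → Set J)
    (hopen : ∀ n, IsOpen (N n)) (hKN : ∀ n, K ⊆ N n)
    (hdec : ∀ n, closure (N (n + 1)) ⊆ N n) (hcpt : ∀ n, IsCompact (closure (N n)))
    (hinter : ⋂ n, N n = K)
    (φ : J → M) (hφ : Continuous φ) (hinjK : Set.InjOn φ K)
    (hloc : ∀ k ∈ K, ∃ U : Set J, IsOpen U ∧ k ∈ U ∧ Set.InjOn φ U) :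
    ∃ n, Set.InjOn φ (N n) :=
  stmt_16_general K N hdec hcpt hinter φ hφ hinjK hloc
end
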